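/- Let Λ > 0, M < 0, Q ≠ 0, and let q₁ denote the unique critical point of φ(q) = -Λq⁴ + 3q² - 6Mq on (0,∞) (which exists and satisfies φ(q₁) > 0). Then the equation φ(q) - 3Q² = 0 has exactly two positive simple roots if 0 < 3Q² < φ(q₁), exactly one positive double root if 3Q² = φ(q₁), and no positive roots if 3Q² > φ(q₁). -/

import Mathlib

open Set Filter Asymptotics

/-!
The derivative `φ'(q) = -4Λq³ + 6q - 6M` is positive at `0` (as `M < 0`) and tends to `-∞`;
since `q₁` is its only positive zero, it is positive on `[0, q₁)` and negative on `(q₁, ∞)`.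
Hence `φ` is unimodal on `[0, ∞)`: it rises from `φ(0) = 0` to its peak `φ(q₁)` and then
decreases to `-∞`, and the intermediate value theorem counts the positive solutions of
`φ(q) = 3Q²`. The roots other than `q₁` are simple because `q₁` is the only critical point,
and at `q₁` the critical equation gives `12Λq₁² = 18 - 18M/q₁ > 6`, so `φ''(q₁) ≠ 0`.
-/

theorem IsPreconnected.pos_of_forall_ne_zero {X α : Type*} [TopologicalSpace X] [LinearOrder α]
    [TopologicalSpace α] [OrderClosedTopology α] [Zero α] {s : Set X} (hs : IsPreconnected s)
    {g : X → α} (hg : ContinuousOn g s) (hne : ∀ x ∈ s, g x ≠ 0) {y : X} (hy : y ∈ s)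
    (hgy : 0 < g y) {x : X} (hx : x ∈ s) : 0 < g x := by
  by_contra! hgx
  obtain ⟨z, hz, hgz⟩ := hs.intermediate_value₂ hx hy hg continuousOn_const hgx hgy.le
  exact hne z hz hgz

theorem tendsto_const_mul_pow_add_atBot {a : ℝ} (ha : a < 0) {n : ℕ} (hn : n ≠ 0) {p : ℝ → ℝ}
    (hp : p =o[atTop] (· ^ n)) : Tendsto (fun x => a * x ^ n + p x) atTop atBot := by
  have hlead : Tendsto (fun x : ℝ => a * x ^ n) atTop atBot :=
    (tendsto_pow_atTop hn).const_mul_atTop_of_neg ha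
  have hequiv : (fun x => p x + a * x ^ n) ~[atTop] fun x => a * x ^ n :=
    (hp.const_mul_right' (isUnit_iff_ne_zero.2 ha.ne)).add_isEquivalent IsEquivalent.refl
  simpa only [add_comm] using hequiv.symm.tendsto_atBot hlead

section Unimodal

variable {f : ℝ → ℝ} {l m : ℝ}

theorem apply_lt_apply_peak (hmono : StrictMonoOn f (Icc l m)) (hanti : StrictAntiOn f (Ici m))
    {x : ℝ} (hx : l ≤ x) (hxm : x ≠ m) : f x < f m := by
  rcases hxm.lt_or_gt with hlt | hgt
  · exact hmono ⟨hx, hlt.le⟩ ⟨hx.trans hlt.le, le_rfl⟩ hlt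
  · exact hanti self_mem_Ici hgt.le hgt

theorem apply_le_apply_peak (hmono : StrictMonoOn f (Icc l m)) (hanti : StrictAntiOn f (Ici m))
    {x : ℝ} (hx : l ≤ x) : f x ≤ f m := by
  rcases eq_or_ne x m with rfl | hxm
  · exact le_rfl
  · exact (apply_lt_apply_peak hmono hanti hx hxm).le

theorem apply_eq_apply_peak_iff (hmono : StrictMonoOn f (Icc l m))
    (hanti : StrictAntiOn f (Ici m)) {x : ℝ} (hx : l ≤ x) : f x = f m ↔ x = m :=
  ⟨fun h => by_contra fun hxm => (apply_lt_apply_peak hmono hanti hx hxm).ne h,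
    fun h => h ▸ rfl⟩

theorem exists_two_preimages_of_unimodal (hf : ContinuousOn f (Ici l))
    (hmono : StrictMonoOn f (Icc l m)) (hanti : StrictAntiOn f (Ici m))
    (hlim : Tendsto f atTop atBot) (hlm : l ≤ m) {c : ℝ} (hlc : f l < c) (hcm : c < f m) :
    ∃ a b, l < a ∧ a < m ∧ m < b ∧ ∀ x, l ≤ x → (f x = c ↔ x = a ∨ x = b) := by
  obtain ⟨a, ⟨hla, ham⟩, hfa⟩ :=
    intermediate_value_Ioo hlm (hf.mono Icc_subset_Ici_self) ⟨hlc, hcm⟩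
  obtain ⟨R, hfR, hmR⟩ :=
    ((hlim.eventually (eventually_lt_atBot c)).and (eventually_gt_atTop m)).exists
  obtain ⟨b, ⟨hmb, -⟩, hfb⟩ := intermediate_value_Ioo' hmR.le
    (hf.mono (Icc_subset_Ici_self.trans (Ici_subset_Ici.2 hlm))) ⟨hfR, hcm⟩
  refine ⟨a, b, hla, ham, hmb, fun x hx => ⟨fun hfx => ?_, ?_⟩⟩
  · rcases lt_trichotomy x m with hxm | rfl | hxm
    · exact .inl (hmono.injOn ⟨hx, hxm.le⟩ ⟨hla.le, ham.le⟩ (hfx.trans hfa.symm))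
    · exact absurd hfx hcm.ne'
    · exact .inr (hanti.injOn hxm.le hmb.le (hfx.trans hfb.symm))
  · rintro (rfl | rfl) <;> assumption

end Unimodal

def phi (Λ M q : ℝ) : ℝ := -Λ * q ^ 4 + 3 * q ^ 2 - 6 * M * q

def phiDeriv (Λ M q : ℝ) : ℝ := -4 * Λ * q ^ 3 + 6 * q - 6 * M

theorem hasDerivAt_phi (Λ M q : ℝ) : HasDerivAt (phi Λ M) (phiDeriv Λ M q) q := by
  have h : HasDerivAt (phi Λ M) _ q := (((hasDerivAt_pow 4 q).const_mul (-Λ)).add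
    ((hasDerivAt_pow 2 q).const_mul 3)).sub ((hasDerivAt_id q).const_mul (6 * M))
  convert h using 1
  unfold phiDeriv
  push_cast
  ring

theorem continuous_phi (Λ M : ℝ) : Continuous (phi Λ M) := by
  unfold phi
  fun_prop

theorem continuous_phiDeriv (Λ M : ℝ) : Continuous (phiDeriv Λ M) := by
  unfold phiDeriv
  fun_prop

theorem tendsto_phi_atTop {Λ : ℝ} (hΛ : 0 < Λ) (M : ℝ) : Tendsto (phi Λ M) atTop atBot := by
  have hlower : (fun q : ℝ => 3 * q ^ 2 - 6 * M * q ^ 1) =o[atTop] (· ^ 4) :=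
    ((isLittleO_pow_pow_atTop_of_lt (by norm_num : 2 < 4)).const_mul_left 3).sub
      ((isLittleO_pow_pow_atTop_of_lt (by norm_num : 1 < 4)).const_mul_left (6 * M))
  convert tendsto_const_mul_pow_add_atBot (neg_lt_zero.2 hΛ) four_ne_zero hlower using 2
  simp only [phi]
  ring

theorem tendsto_phiDeriv_atTop {Λ : ℝ} (hΛ : 0 < Λ) (M : ℝ) :
    Tendsto (phiDeriv Λ M) atTop atBot := by
  have hlower : (fun q : ℝ => 6 * q ^ 1 - 6 * M * q ^ 0) =o[atTop] (· ^ 3) :=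
    ((isLittleO_pow_pow_atTop_of_lt (by norm_num : 1 < 3)).const_mul_left 6).sub
      ((isLittleO_pow_pow_atTop_of_lt (by norm_num : 0 < 3)).const_mul_left (6 * M))
  convert tendsto_const_mul_pow_add_atBot (by linarith : -4 * Λ < 0) three_ne_zero hlower using 2
  simp only [phiDeriv]
  ring

section Monotonicity

variable {Λ M q₁ : ℝ}

theorem phiDeriv_pos_of_lt (hM : M < 0)
    (huniq : ∀ q, 0 < q → phiDeriv Λ M q = 0 → q = q₁) {q : ℝ} (hq : 0 ≤ q) (hqq₁ : q < q₁) :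
    0 < phiDeriv Λ M q := by
  have hzero : 0 < phiDeriv Λ M 0 := by unfold phiDeriv; linarith
  refine isPreconnected_Ico.pos_of_forall_ne_zero (continuous_phiDeriv Λ M).continuousOn
    (fun x hx hx0 => ?_) ⟨le_rfl, hq.trans_lt hqq₁⟩ hzero ⟨hq, hqq₁⟩
  rcases hx.1.eq_or_lt with rfl | hxpos
  · exact hzero.ne' hx0
  · exact hx.2.ne (huniq x hxpos hx0)

theorem phiDeriv_neg_of_gt (hΛ : 0 < Λ) (hq₁ : 0 ≤ q₁)
    (huniq : ∀ q, 0 < q → phiDeriv Λ M q = 0 → q = q₁) {q : ℝ} (hqq₁ : q₁ < q) :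
    phiDeriv Λ M q < 0 := by
  obtain ⟨y, hy, hyq₁⟩ :=
    (((tendsto_phiDeriv_atTop hΛ M).eventually (eventually_lt_atBot 0)).and
      (eventually_gt_atTop q₁)).exists
  refine neg_pos.1 (isPreconnected_Ioi.pos_of_forall_ne_zero
    (continuous_phiDeriv Λ M).neg.continuousOn (fun x hx hx0 => ?_) hyq₁ (neg_pos.2 hy) hqq₁)
  exact hx.ne' (huniq x (hq₁.trans_lt hx) (neg_eq_zero.1 hx0))

theorem strictMonoOn_phi (hM : M < 0) (huniq : ∀ q, 0 < q → phiDeriv Λ M q = 0 → q = q₁) :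
    StrictMonoOn (phi Λ M) (Icc 0 q₁) := by
  refine strictMonoOn_of_deriv_pos (convex_Icc 0 q₁) (continuous_phi Λ M).continuousOn
    fun q hq => ?_
  rw [interior_Icc] at hq
  rw [(hasDerivAt_phi Λ M q).deriv]
  exact phiDeriv_pos_of_lt hM huniq hq.1.le hq.2

theorem strictAntiOn_phi (hΛ : 0 < Λ) (hq₁ : 0 ≤ q₁)
    (huniq : ∀ q, 0 < q → phiDeriv Λ M q = 0 → q = q₁) : StrictAntiOn (phi Λ M) (Ici q₁) := by
  refine strictAntiOn_of_deriv_neg (convex_Ici q₁) (continuous_phi Λ M).continuousOn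
    fun q hq => ?_
  rw [interior_Ici] at hq
  rw [(hasDerivAt_phi Λ M q).deriv]
  exact phiDeriv_neg_of_gt hΛ hq₁ huniq hq

end Monotonicity

/-- Horizon structure for `Λ > 0`, `M < 0` (signature `(-+++)`): with `q₁` the unique
positive critical point of `φ(q) = -Λq⁴ + 3q² - 6Mq`, one has `φ(q₁) > 0`, and
`φ(q) - 3Q² = 0` has two positive simple roots, one positive double root, or no
positive roots according as `3Q²` is less than, equal to, or greater than `φ(q₁)`. -/
theorem positive_lambda_negative_mass_horizons (Λ M Q q₁ : ℝ)
    (hΛ : 0 < Λ) (hM : M < 0) (hQ : Q ≠ 0) (h1 : 0 < q₁)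
    (hc : -4 * Λ * q₁ ^ 3 + 6 * q₁ - 6 * M = 0)
    (huniq : ∀ q : ℝ, 0 < q → -4 * Λ * q ^ 3 + 6 * q - 6 * M = 0 → q = q₁) :
    0 < -Λ * q₁ ^ 4 + 3 * q₁ ^ 2 - 6 * M * q₁ ∧
    (3 * Q ^ 2 < -Λ * q₁ ^ 4 + 3 * q₁ ^ 2 - 6 * M * q₁ →
      ∃ a b : ℝ, 0 < a ∧ a < b ∧
        (∀ q : ℝ, 0 < q →
          ((-Λ * q ^ 4 + 3 * q ^ 2 - 6 * M * q) - 3 * Q ^ 2 = 0 ↔ q = a ∨ q = b)) ∧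
        -4 * Λ * a ^ 3 + 6 * a - 6 * M ≠ 0 ∧ -4 * Λ * b ^ 3 + 6 * b - 6 * M ≠ 0) ∧
    (3 * Q ^ 2 = -Λ * q₁ ^ 4 + 3 * q₁ ^ 2 - 6 * M * q₁ →
      (∀ q : ℝ, 0 < q →
        ((-Λ * q ^ 4 + 3 * q ^ 2 - 6 * M * q) - 3 * Q ^ 2 = 0 ↔ q = q₁)) ∧
      -12 * Λ * q₁ ^ 2 + 6 ≠ 0) ∧
    (3 * Q ^ 2 > -Λ * q₁ ^ 4 + 3 * q₁ ^ 2 - 6 * M * q₁ →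
      ∀ q : ℝ, 0 < q → (-Λ * q ^ 4 + 3 * q ^ 2 - 6 * M * q) - 3 * Q ^ 2 ≠ 0) := by
  have hmono : StrictMonoOn (phi Λ M) (Icc 0 q₁) := strictMonoOn_phi hM huniq
  have hanti : StrictAntiOn (phi Λ M) (Ici q₁) := strictAntiOn_phi hΛ h1.le huniq
  have hphi_zero : phi Λ M 0 = 0 := by simp [phi]
  have hpeak : 0 < phi Λ M q₁ :=
    hphi_zero ▸ hmono (left_mem_Icc.2 h1.le) (right_mem_Icc.2 h1.le) h1
  have hsimple (q : ℝ) (hq : 0 < q) (hqq₁ : q ≠ q₁) : phiDeriv Λ M q ≠ 0 :=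
    fun h => hqq₁ (huniq q hq h)
  refine ⟨hpeak, fun hlt => ?_, fun heq => ⟨fun q hq => ?_, ?_⟩, fun hgt q hq => ?_⟩
  · obtain ⟨a, b, ha, haq₁, hq₁b, hroots⟩ :=
      exists_two_preimages_of_unimodal (continuous_phi Λ M).continuousOn hmono hanti
        (tendsto_phi_atTop hΛ M) h1.le (c := 3 * Q ^ 2) (by rw [hphi_zero]; positivity) hlt
    exact ⟨a, b, ha, haq₁.trans hq₁b, fun q hq => sub_eq_zero.trans (hroots q hq.le),
      hsimple a ha haq₁.ne, hsimple b (h1.trans hq₁b) hq₁b.ne'⟩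
  · rw [sub_eq_zero, heq]
    exact apply_eq_apply_peak_iff hmono hanti hq.le
  · nlinarith [mul_pos hΛ (mul_pos h1 h1)]
  · exact sub_ne_zero.2 ((apply_le_apply_peak hmono hanti hq.le).trans_lt hgt).ne
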